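/- arXiv:2602.08538 — 3 statements merged into one kernel-verified Lean document; each statement's English description precedes it below -/
import Mathlib

section
/- Let E be a finite-dimensional real inner product space, K ≥ 0 an integer, and J : (Fin (K+1) → E) → ℝ a continuously differentiable function such that for each block index k the partial gradient ∇_{x_k} J is L_k-Lipschitz in the k-th block uniformly in the other blocks, with L_k > 0. Let step sizes satisfy 0 < η_k ≤ 1/L_k. Given X = (x_0, …, x_K), define one backward Gauss–Seidel sweep X' = (x'_0, …, x'_K) by setting, for k = K, K−1, …, 0, x'_k = x_k − η_k ∇_{x_k} J(x_0, …, x_{k−1}, x_k, x'_{k+1}, …, x'_K). Then J(X') ≤ J(X) − Σ_{k=0}^{K} (1/η_k − L_k/2) ‖x'_k − x_k‖². -/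
open InnerProductSpace in
lemma descent_lemma {E : Type*} [NormedAddCommGroup E] [InnerProductSpace ℝ E]
    [CompleteSpace E] (f : E → ℝ) (hf : ContDiff ℝ 1 f) (L : ℝ)
    (hlip : ∀ u v, ‖gradient f u - gradient f v‖ ≤ L * ‖u - v‖)
    (x y : E) :
    f y ≤ f x + inner ℝ (gradient f x) (y - x) + L / 2 * ‖y - x‖ ^ 2 := by
  set v := y - x with hv
  have hdiff : ∀ p : E, HasGradientAt f (gradient f p) p := fun p =>
    (hf.differentiable one_ne_zero p).hasGradientAt
  have hline : ∀ t : ℝ, HasDerivAt (fun t : ℝ => f (x + t • v))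
      (inner ℝ (gradient f (x + t • v)) v) t := by
    intro t
    have h1 : HasDerivAt (fun t : ℝ => x + t • v) v t := by
      simpa using ((hasDerivAt_id t).smul_const v).const_add x
    have h2 := ((hdiff (x + t • v)).hasFDerivAt).comp_hasDerivAt t h1
    exact h2.congr_deriv (by simp [InnerProductSpace.toDual_apply_apply])
  set g : ℝ → ℝ := fun t => f (x + t • v) - t * inner ℝ (gradient f x) v - L / 2 * ‖v‖ ^ 2 * t ^ 2
    with hg
  have hg' : ∀ t : ℝ, HasDerivAt g
      (inner ℝ (gradient f (x + t • v)) v - inner ℝ (gradient f x) v - L * ‖v‖ ^ 2 * t) t := by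
    intro t
    have h1 : HasDerivAt (fun t : ℝ => t * inner ℝ (gradient f x) v)
        (inner ℝ (gradient f x) v) t := by
      simpa using (hasDerivAt_id t).mul_const (inner ℝ (gradient f x) v : ℝ)
    have h2 : HasDerivAt (fun t : ℝ => L / 2 * ‖v‖ ^ 2 * t ^ 2) (L * ‖v‖ ^ 2 * t) t := by
      have := (hasDerivAt_pow 2 t).const_mul (L / 2 * ‖v‖ ^ 2)
      refine this.congr_deriv ?_
      ring
    exact ((hline t).sub h1).sub h2
  have hanti : AntitoneOn g (Set.Icc 0 1) := by
    apply antitoneOn_of_deriv_nonpos (convex_Icc 0 1)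
    · exact fun t _ => (hg' t).continuousAt.continuousWithinAt
    · intro t ht
      exact (hg' t).differentiableAt.differentiableWithinAt
    · intro t ht
      rw [(hg' t).deriv]
      simp only [interior_Icc, Set.mem_Ioo] at ht
      have hb : inner ℝ (gradient f (x + t • v)) v - inner ℝ (gradient f x) v
          ≤ L * ‖v‖ ^ 2 * t := by
        calc inner ℝ (gradient f (x + t • v)) v - inner ℝ (gradient f x) v
            = inner ℝ (gradient f (x + t • v) - gradient f x) v := by
              rw [inner_sub_left]
          _ ≤ ‖gradient f (x + t • v) - gradient f x‖ * ‖v‖ := real_inner_le_norm _ _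
          _ ≤ (L * ‖(x + t • v) - x‖) * ‖v‖ := by
              gcongr; exact hlip _ _
          _ = L * ‖v‖ ^ 2 * t := by
              simp [norm_smul, abs_of_pos ht.1]; ring
      linarith
  have key : g 1 ≤ g 0 := hanti (by norm_num) (by norm_num) zero_le_one
  have h0 : g 0 = f x := by simp [hg]
  have h1 : g 1 = f y - inner ℝ (gradient f x) v - L / 2 * ‖v‖ ^ 2 := by
    simp [hg, hv]
  rw [h0, h1] at key
  linarith

/-- The partial gradient of `J` with respect to the `k`-th block, the other blocks being
fixed to the values given by `Y` (and the gradient being taken at `Y k`). -/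
noncomputable def blockGrad {E : Type*} [NormedAddCommGroup E] [InnerProductSpace ℝ E]
    [CompleteSpace E] {K : ℕ} (J : (Fin (K + 1) → E) → ℝ)
    (Y : Fin (K + 1) → E) (k : Fin (K + 1)) : E :=
  gradient (fun u => J (Function.update Y k u)) (Y k)

/-- Single block update descent. -/
lemma block_step {E : Type*} [NormedAddCommGroup E] [InnerProductSpace ℝ E]
    [FiniteDimensional ℝ E] {K : ℕ} (J : (Fin (K + 1) → E) → ℝ) (hJ : ContDiff ℝ 1 J)
    (k : Fin (K + 1)) (Lk ηk : ℝ) (hηk : 0 < ηk)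
    (hlip : ∀ (Y : Fin (K + 1) → E) (u v : E),
      ‖gradient (fun w => J (Function.update Y k w)) u -
        gradient (fun w => J (Function.update Y k w)) v‖ ≤ Lk * ‖u - v‖)
    (Y : Fin (K + 1) → E) :
    J (Function.update Y k (Y k - ηk • blockGrad J Y k)) ≤
      J Y - (1 / ηk - Lk / 2) * ‖(Y k - ηk • blockGrad J Y k) - Y k‖ ^ 2 := by
  set f : E → ℝ := fun u => J (Function.update Y k u) with hf
  have hfc : ContDiff ℝ 1 f := hJ.comp (contDiff_update 1 Y k)
  set G : E := blockGrad J Y k with hG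
  have hGdef : G = gradient f (Y k) := rfl
  have h := descent_lemma f hfc Lk (hlip Y) (Y k) (Y k - ηk • G)
  have hxx : (Y k - ηk • G) - Y k = -(ηk • G) := by abel
  rw [hxx, ← hGdef] at h
  have hinner : (inner ℝ G (-(ηk • G)) : ℝ) = -(ηk * ‖G‖ ^ 2) := by
    rw [inner_neg_right, real_inner_smul_right, real_inner_self_eq_norm_sq]
  have hnorm : ‖-(ηk • G)‖ ^ 2 = ηk ^ 2 * ‖G‖ ^ 2 := by
    rw [norm_neg, norm_smul]
    simp [abs_of_pos hηk, mul_pow]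
  have hfx : f (Y k) = J Y := by rw [hf]; simp
  rw [hinner, hnorm, hfx] at h
  have heq : J Y - (1 / ηk - Lk / 2) * ‖-(ηk • G)‖ ^ 2 =
      J Y + -(ηk * ‖G‖ ^ 2) + Lk / 2 * (ηk ^ 2 * ‖G‖ ^ 2) := by
    rw [hnorm]
    field_simp
    ring
  rw [hxx, heq]
  exact h

/-- One backward Gauss–Seidel sweep (updating blocks `K, K-1, …, 0`, each block update
using the already-updated later blocks and the old earlier blocks) decreases the
objective `J` by at least `∑ₖ (1/ηₖ - Lₖ/2) ‖x'ₖ - xₖ‖²`. -/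
theorem gauss_seidel_sweep_descent
    {E : Type*} [NormedAddCommGroup E] [InnerProductSpace ℝ E] [FiniteDimensional ℝ E]
    {K : ℕ} (J : (Fin (K + 1) → E) → ℝ) (hJ : ContDiff ℝ 1 J)
    (L η : Fin (K + 1) → ℝ) (hL : ∀ k, 0 < L k)
    (hLip : ∀ (k : Fin (K + 1)) (Y : Fin (K + 1) → E) (u v : E),
      ‖gradient (fun w => J (Function.update Y k w)) u -
        gradient (fun w => J (Function.update Y k w)) v‖ ≤ L k * ‖u - v‖)
    (hη : ∀ k, 0 < η k ∧ η k ≤ 1 / L k)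
    (X X' : Fin (K + 1) → E)
    (hsweep : ∀ k : Fin (K + 1),
      X' k = X k - η k • blockGrad J (fun j => if k < j then X' j else X j) k) :
    J X' ≤ J X - ∑ k, (1 / η k - L k / 2) * ‖X' k - X k‖ ^ 2 := by
  set Z : ℕ → Fin (K + 1) → E := fun m j => if m ≤ (j : ℕ) then X' j else X j with hZ
  have hZ0 : Z 0 = X' := by funext j; simp [hZ]
  have hZK : Z (K + 1) = X := by
    funext j; simp only [hZ]; rw [if_neg]; omega
  set T : ℕ → ℝ := fun i =>
    if h : i < K + 1 then (1 / η ⟨i, h⟩ - L ⟨i, h⟩ / 2) * ‖X' ⟨i, h⟩ - X ⟨i, h⟩‖ ^ 2 else 0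
    with hT
  have step : ∀ k : Fin (K + 1), J (Z k) ≤ J (Z ((k : ℕ) + 1)) - T k := by
    intro k
    set Y : Fin (K + 1) → E := Z ((k : ℕ) + 1) with hY
    have hYeq : Y = fun j => if k < j then X' j else X j := by
      funext j
      simp only [hY, hZ, Fin.lt_def, Nat.add_one_le_iff]
    have hYk : Y k = X k := by
      simp only [hY, hZ]; rw [if_neg]; omega
    have hXk : X' k = Y k - η k • blockGrad J Y k := by
      rw [hYk, hsweep k, hYeq]
    have hupd : Function.update Y k (Y k - η k • blockGrad J Y k) = Z k := by
      rw [← hXk]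
      funext j
      by_cases hj : j = k
      · subst hj; simp [hZ]
      · rw [Function.update_of_ne hj]
        simp only [hY, hZ]
        have hne : (j : ℕ) ≠ (k : ℕ) := fun h => hj (Fin.ext h)
        by_cases hle : (k : ℕ) ≤ (j : ℕ)
        · rw [if_pos (by omega), if_pos hle]
        · rw [if_neg (by omega), if_neg hle]
    have hs := block_step J hJ k (L k) (η k) (hη k).1 (hLip k) Y
    rw [hupd, ← hXk, hYk] at hs
    have hTk : T (k : ℕ) = (1 / η k - L k / 2) * ‖X' k - X k‖ ^ 2 := by
      rw [hT]; simp only [dif_pos k.isLt, Fin.eta]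
    rw [hTk]
    exact hs
  have main : ∀ m, m ≤ K + 1 → J X' ≤ J (Z m) - ∑ i ∈ Finset.range m, T i := by
    intro m
    induction m with
    | zero => intro _; simp [hZ0]
    | succ n ih =>
      intro hn
      have hn' : n < K + 1 := hn
      have h1 := ih (le_of_lt hn')
      have h2 := step ⟨n, hn'⟩
      rw [Finset.sum_range_succ]
      simp only [Fin.val_mk] at h2 ⊢
      linarith
  have := main (K + 1) le_rfl
  rw [hZK] at this
  have hsum : ∑ k, (1 / η k - L k / 2) * ‖X' k - X k‖ ^ 2 = ∑ i ∈ Finset.range (K + 1), T i := by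
    rw [← Fin.sum_univ_eq_sum_range]
    apply Finset.sum_congr rfl
    intro k _
    rw [hT]; simp only [dif_pos k.isLt, Fin.eta]
  rw [hsum]
  exact this
end

section
/- Let E be a finite-dimensional real inner product space, K ≥ 0 an integer, and J : (Fin (K+1) → E) → ℝ continuously differentiable with L_k-Lipschitz partial gradient in each block k (uniformly in the other blocks), and step sizes 0 < η_k ≤ 1/L_k. Let {X^{(ℓ)}}_{ℓ≥0} be the sequence of iterates where X^{(ℓ)} is obtained from X^{(ℓ−1)} by one backward Gauss–Seidel sweep: x_k^{(ℓ)} = x_k^{(ℓ−1)} − η_k ∇_{x_k} J(x_0^{(ℓ−1)}, …, x_k^{(ℓ−1)}, x_{k+1}^{(ℓ)}, …, x_K^{(ℓ)}) for k = K down to 0. Then the objective values decrease monotonically: J(X^{(ℓ+1)}) ≤ J(X^{(ℓ)}) for all ℓ ≥ 0. -/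
open InnerProductSpace

section Aux

variable {E : Type*} [NormedAddCommGroup E] [InnerProductSpace ℝ E] [FiniteDimensional ℝ E]

private lemma hasDerivAt_line_aux (f : E → ℝ) (hf : ContDiff ℝ 1 f) (x d : E) (t : ℝ) :
    HasDerivAt (fun s : ℝ => f (x + s • d)) ⟪gradient f (x + t • d), d⟫_ℝ t := by
  have h1 : HasDerivAt (fun s : ℝ => x + s • d) d t := by
    simpa using ((hasDerivAt_id t).smul_const d).const_add x
  have h2 := ((hf.differentiable one_ne_zero) (x + t • d)).hasGradientAt
  have h3 := h2.hasFDerivAt.comp_hasDerivAt t h1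
  exact h3

private lemma quad_bound_aux (f : E → ℝ) (hf : ContDiff ℝ 1 f) (L : ℝ)
    (hlip : ∀ u v, ‖gradient f u - gradient f v‖ ≤ L * ‖u - v‖) (x d : E) :
    f (x + d) ≤ f x + ⟪gradient f x, d⟫_ℝ + L / 2 * ‖d‖ ^ 2 := by
  set φ : ℝ → ℝ := fun t => f (x + t • d) - t * ⟪gradient f x, d⟫_ℝ - L * t ^ 2 / 2 * ‖d‖ ^ 2
    with hφ
  have hder : ∀ t, HasDerivAt φ
      (⟪gradient f (x + t • d), d⟫_ℝ - ⟪gradient f x, d⟫_ℝ - L * t * ‖d‖ ^ 2) t := by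
    intro t
    have h1 := hasDerivAt_line_aux f hf x d t
    have h2 : HasDerivAt (fun t : ℝ => t * ⟪gradient f x, d⟫_ℝ) ⟪gradient f x, d⟫_ℝ t := by
      simpa using (hasDerivAt_id t).mul_const ⟪gradient f x, d⟫_ℝ
    have h3 : HasDerivAt (fun t : ℝ => L * t ^ 2 / 2 * ‖d‖ ^ 2) (L * t * ‖d‖ ^ 2) t := by
      have : HasDerivAt (fun t : ℝ => t ^ 2) (2 * t) t := by
        simpa using hasDerivAt_pow 2 t
      have := ((this.const_mul L).div_const 2).mul_const (‖d‖ ^ 2)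
      exact this.congr_deriv (by ring)
    exact (h1.sub h2).sub h3
  have hanti : AntitoneOn φ (Set.Icc 0 1) := by
    apply antitoneOn_of_deriv_nonpos (convex_Icc 0 1)
    · exact Continuous.continuousOn (by
        have : Continuous φ := by
          apply Continuous.sub
          apply Continuous.sub
          · exact hf.continuous.comp (by continuity)
          · continuity
          · continuity
        exact this)
    · intro t _; exact (hder t).differentiableAt.differentiableWithinAt
    · intro t ht
      rw [(hder t).deriv]
      have ht0 : 0 ≤ t := by
        simp [interior_Icc] at ht; linarith [ht.1]
      have key : ⟪gradient f (x + t • d) - gradient f x, d⟫_ℝ ≤ L * t * ‖d‖ ^ 2 := by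
        calc ⟪gradient f (x + t • d) - gradient f x, d⟫_ℝ
            ≤ ‖gradient f (x + t • d) - gradient f x‖ * ‖d‖ := real_inner_le_norm _ _
          _ ≤ (L * ‖x + t • d - x‖) * ‖d‖ := by
              gcongr; exact hlip _ _
          _ = L * t * ‖d‖ ^ 2 := by
              rw [add_sub_cancel_left, norm_smul, Real.norm_eq_abs, abs_of_nonneg ht0]; ring
      rw [inner_sub_left] at key
      linarith
  have h01 := hanti (Set.left_mem_Icc.2 one_pos.le) (Set.right_mem_Icc.2 one_pos.le) one_pos.le
  simp only [hφ] at h01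
  norm_num at h01
  linarith [inner_gradient_left (𝕜 := ℝ) (f := f) (x := x) (y := d)]

private lemma descent_step_aux (f : E → ℝ) (hf : ContDiff ℝ 1 f) (L : ℝ) (hL : 0 < L)
    (hlip : ∀ u v, ‖gradient f u - gradient f v‖ ≤ L * ‖u - v‖)
    (η : ℝ) (hη : 0 < η) (hη' : η ≤ 1 / L) (x : E) :
    f (x - η • gradient f x) ≤ f x := by
  set g := gradient f x with hg
  have := quad_bound_aux f hf L hlip x (-(η • g))
  have hx : x + -(η • g) = x - η • g := by abel
  rw [hx] at this
  have hin : ⟪g, -(η • g)⟫_ℝ = -(η * ‖g‖ ^ 2) := by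
    rw [inner_neg_right, real_inner_smul_right, real_inner_self_eq_norm_sq]
  have hn : ‖-(η • g)‖ ^ 2 = η ^ 2 * ‖g‖ ^ 2 := by
    rw [norm_neg, norm_smul, Real.norm_eq_abs, abs_of_nonneg hη.le, mul_pow]
  rw [hin, hn] at this
  have hLη : L * η ≤ 1 := by
    rw [le_div_iff₀ hL] at hη'; linarith
  nlinarith [sq_nonneg ‖g‖, sq_nonneg η, mul_pos hη hη]

end Aux

/-- Part 1 of Proposition 1 (monotone descent): the backward Gauss–Seidel sweep iterates
satisfy `J(X^{(ℓ+1)}) ≤ J(X^{(ℓ)})` for all `ℓ`. -/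
theorem gauss_seidel_monotone_descent
    {E : Type*} [NormedAddCommGroup E] [InnerProductSpace ℝ E] [FiniteDimensional ℝ E]
    {K : ℕ} (J : (Fin (K + 1) → E) → ℝ) (hJ : ContDiff ℝ 1 J)
    (L η : Fin (K + 1) → ℝ) (hL : ∀ k, 0 < L k)
    (hLip : ∀ (k : Fin (K + 1)) (Y : Fin (K + 1) → E) (u v : E),
      ‖gradient (fun w => J (Function.update Y k w)) u -
        gradient (fun w => J (Function.update Y k w)) v‖ ≤ L k * ‖u - v‖)
    (hη : ∀ k, 0 < η k ∧ η k ≤ 1 / L k)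
    (X : ℕ → Fin (K + 1) → E)
    (hsweep : ∀ (ℓ : ℕ) (k : Fin (K + 1)),
      X (ℓ + 1) k = X ℓ k -
        η k • blockGrad J (fun j => if k < j then X (ℓ + 1) j else X ℓ j) k) :
    ∀ ℓ : ℕ, J (X (ℓ + 1)) ≤ J (X ℓ) := by
  intro ℓ
  set Y : ℕ → Fin (K + 1) → E := fun m j => if m ≤ j.val then X (ℓ + 1) j else X ℓ j with hY
  have hY0 : Y 0 = X (ℓ + 1) := by
    funext j; simp [hY]
  have hYtop : Y (K + 1) = X ℓ := by
    funext j; simp [hY, Nat.not_le.mpr j.isLt]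
  have hstep : ∀ m : ℕ, m < K + 1 → J (Y m) ≤ J (Y (m + 1)) := by
    intro m hm
    set k : Fin (K + 1) := ⟨m, hm⟩ with hk
    set W : Fin (K + 1) → E := fun j => if k < j then X (ℓ + 1) j else X ℓ j with hW
    have hWY : Y (m + 1) = W := by
      funext j
      simp only [hY, hW, Fin.lt_def, hk, Nat.succ_le_iff]
    set f : E → ℝ := fun u => J (Function.update W k u) with hf
    have hfC : ContDiff ℝ 1 f := by
      apply hJ.comp
      apply contDiff_pi.mpr
      intro j
      by_cases hjk : j = k
      · subst hjk; simp [Function.update_apply]; exact contDiff_id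
      · simpa [Function.update_apply, hjk] using contDiff_const (c := W j)
    have hWk : W k = X ℓ k := by simp [hW]
    have hupd : Function.update W k (W k) = W := Function.update_eq_self _ _
    have hYm : Y m = Function.update W k (X (ℓ + 1) k) := by
      funext j
      by_cases hjk : j = k
      · subst hjk; simp [hY, hk]
      · have hjm : j.val ≠ m := fun h => hjk (Fin.ext h)
        simp only [Function.update_apply, if_neg hjk, hY, hW, Fin.lt_def, hk]
        rw [if_neg (show ¬ j = ⟨m, hm⟩ from hjk)]
        congr 1
        simp [Nat.lt_iff_le_and_ne, Ne.symm hjm, eq_comm]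
    have hdes := descent_step_aux f hfC (L k) (hL k) (hLip k W) (η k) (hη k).1 (hη k).2
      (W k)
    have hsw : X (ℓ + 1) k = W k - η k • gradient f (W k) := by
      rw [hWk]
      simpa [blockGrad, hW, hf, hWk] using hsweep ℓ k
    calc J (Y m) = f (X (ℓ + 1) k) := by rw [hYm]
      _ = f (W k - η k • gradient f (W k)) := by rw [hsw]
      _ ≤ f (W k) := hdes
      _ = J (Y (m + 1)) := by rw [hf]; simp only [hupd]; rw [hWY]
  have hchain : ∀ m : ℕ, m ≤ K + 1 → J (Y 0) ≤ J (Y m) := by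
    intro m
    induction m with
    | zero => intro _; exact le_refl _
    | succ n ih => intro h; exact le_trans (ih (Nat.le_of_succ_le h)) (hstep n h)
  have := hchain (K + 1) le_rfl
  rwa [hY0, hYtop] at this
end

section
/- Let E be a finite-dimensional real inner product space, K ≥ 0 an integer, and J : (Fin (K+1) → E) → ℝ continuously differentiable, bounded below, with L_k-Lipschitz partial gradient in each block k (uniformly in the other blocks), and step sizes 0 < η_k ≤ 1/L_k. Let {X^{(ℓ)}}_{ℓ≥0} be the backward Gauss–Seidel sweep iterates: x_k^{(ℓ)} = x_k^{(ℓ−1)} − η_k ∇_{x_k} J(x_0^{(ℓ−1)}, …, x_k^{(ℓ−1)}, x_{k+1}^{(ℓ)}, …, x_K^{(ℓ)}) for k = K down to 0. Then the step differences are square-summable, Σ_{ℓ≥0} Σ_{k=0}^{K} ‖x_k^{(ℓ+1)} − x_k^{(ℓ)}‖² < ∞, and consequently ‖x_k^{(ℓ+1)} − x_k^{(ℓ)}‖ → 0 as ℓ → ∞ for every k. -/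
open Filter Topology
open scoped RealInnerProductSpace

lemma descent_ineq {E : Type*} [NormedAddCommGroup E] [InnerProductSpace ℝ E] [CompleteSpace E]
    (f : E → ℝ) (hf : Differentiable ℝ f) {L : ℝ}
    (hLip : ∀ u v, ‖gradient f u - gradient f v‖ ≤ L * ‖u - v‖) (x d : E) :
    f (x + d) ≤ f x + ⟪gradient f x, d⟫ + L / 2 * ‖d‖ ^ 2 := by
  have hcomp : ∀ t : ℝ, HasDerivAt (fun s : ℝ => f (x + s • d))
      ⟪gradient f (x + t • d), d⟫ t := by
    intro t
    have h1 : HasDerivAt (fun s : ℝ => x + s • d) d t := by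
      simpa using ((hasDerivAt_id t).smul_const d).const_add x
    have h2 := (hf (x + t • d)).hasGradientAt
    rw [hasGradientAt_iff_hasFDerivAt] at h2
    have := h2.comp_hasDerivAt t h1
    simpa [InnerProductSpace.toDual_apply_apply, Function.comp_def] using this
  set φ : ℝ → ℝ := fun t =>
    f x + ⟪gradient f x, d⟫ * t + (L / 2 * ‖d‖ ^ 2) * t ^ 2 - f (x + t • d) with hφdef
  have hφd : ∀ t : ℝ, HasDerivAt φ
      (⟪gradient f x, d⟫ + (L / 2 * ‖d‖ ^ 2) * (2 * t) - ⟪gradient f (x + t • d), d⟫) t := by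
    intro t
    have ha : HasDerivAt (fun t : ℝ => f x + ⟪gradient f x, d⟫ * t + (L / 2 * ‖d‖ ^ 2) * t ^ 2)
        (⟪gradient f x, d⟫ + (L / 2 * ‖d‖ ^ 2) * (2 * t)) t := by
      have h1 := ((hasDerivAt_id t).const_mul ⟪gradient f x, d⟫).const_add (f x)
      have h2 := (hasDerivAt_pow 2 t).const_mul (L / 2 * ‖d‖ ^ 2)
      have := h1.add h2
      refine HasDerivAt.congr_deriv this ?_
      ring
    exact ha.sub (hcomp t)
  have hmono : MonotoneOn φ (Set.Icc (0 : ℝ) 1) := by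
    apply monotoneOn_of_deriv_nonneg (convex_Icc 0 1)
    · exact Continuous.continuousOn (by
        rw [continuous_iff_continuousAt]; exact fun t => (hφd t).continuousAt)
    · exact fun t _ => (hφd t).differentiableAt.differentiableWithinAt
    · intro t ht
      rw [interior_Icc] at ht
      rw [(hφd t).deriv]
      have hb : ⟪gradient f (x + t • d) - gradient f x, d⟫ ≤ L * t * ‖d‖ ^ 2 := by
        calc ⟪gradient f (x + t • d) - gradient f x, d⟫
            ≤ ‖gradient f (x + t • d) - gradient f x‖ * ‖d‖ := real_inner_le_norm _ _
          _ ≤ (L * ‖(x + t • d) - x‖) * ‖d‖ :=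
              mul_le_mul_of_nonneg_right (hLip _ _) (norm_nonneg d)
          _ = L * t * ‖d‖ ^ 2 := by
              have : ‖(x + t • d) - x‖ = t * ‖d‖ := by
                simp [norm_smul, abs_of_pos ht.1]
              rw [this]; ring
      have hb' : ⟪gradient f (x + t • d), d⟫ - ⟪gradient f x, d⟫ ≤ L * t * ‖d‖ ^ 2 := by
        rwa [← inner_sub_left]
      nlinarith
  have h01 := hmono (Set.left_mem_Icc.2 zero_le_one) (Set.right_mem_Icc.2 zero_le_one) zero_le_one
  have hφ0 : φ 0 = 0 := by simp [hφdef]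
  have hφ1 : φ 1 = f x + ⟪gradient f x, d⟫ + L / 2 * ‖d‖ ^ 2 - f (x + d) := by
    simp [hφdef]
  rw [hφ0, hφ1] at h01
  linarith

lemma descent_step {E : Type*} [NormedAddCommGroup E] [InnerProductSpace ℝ E] [CompleteSpace E]
    (f : E → ℝ) (hf : Differentiable ℝ f) {L η : ℝ} (hη : 0 < η) (hηL : η * L ≤ 1)
    (hLip : ∀ u v, ‖gradient f u - gradient f v‖ ≤ L * ‖u - v‖) (x : E) :
    f (x - η • gradient f x) ≤
      f x - 1 / (2 * η) * ‖x - η • gradient f x - x‖ ^ 2 := by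
  have h := descent_ineq f hf hLip x (-(η • gradient f x))
  rw [← sub_eq_add_neg] at h
  have hinner : ⟪gradient f x, -(η • gradient f x)⟫ = -(η * ‖gradient f x‖ ^ 2) := by
    rw [inner_neg_right, real_inner_smul_right, real_inner_self_eq_norm_sq]
  have hnorm : ‖-(η • gradient f x)‖ ^ 2 = η ^ 2 * ‖gradient f x‖ ^ 2 := by
    rw [norm_neg, norm_smul, Real.norm_eq_abs, abs_of_pos hη, mul_pow]
  have hnorm2 : ‖x - η • gradient f x - x‖ ^ 2 = η ^ 2 * ‖gradient f x‖ ^ 2 := by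
    rw [show x - η • gradient f x - x = -(η • gradient f x) by abel, hnorm]
  rw [hinner, hnorm] at h
  rw [hnorm2]
  have hg2 : (0 : ℝ) ≤ ‖gradient f x‖ ^ 2 := sq_nonneg _
  have h1 : 1 / (2 * η) * (η ^ 2 * ‖gradient f x‖ ^ 2) = η / 2 * ‖gradient f x‖ ^ 2 := by
    field_simp
  rw [h1]
  nlinarith

set_option maxHeartbeats 1600000 in
/-- Part 2 of Proposition 1 (vanishing steps): for the backward Gauss–Seidel sweep iterates
of a bounded-below, continuously differentiable objective with block-Lipschitz gradients,
the step differences are square-summable and hence `‖x_k^{(ℓ+1)} - x_k^{(ℓ)}‖ → 0`. -/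
theorem gauss_seidel_vanishing_steps
    {E : Type*} [NormedAddCommGroup E] [InnerProductSpace ℝ E] [FiniteDimensional ℝ E]
    {K : ℕ} (J : (Fin (K + 1) → E) → ℝ) (hJ : ContDiff ℝ 1 J)
    (hbdd : ∃ B : ℝ, ∀ Y : Fin (K + 1) → E, B ≤ J Y)
    (L η : Fin (K + 1) → ℝ) (hL : ∀ k, 0 < L k)
    (hLip : ∀ (k : Fin (K + 1)) (Y : Fin (K + 1) → E) (u v : E),
      ‖gradient (fun w => J (Function.update Y k w)) u -
        gradient (fun w => J (Function.update Y k w)) v‖ ≤ L k * ‖u - v‖)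
    (hη : ∀ k, 0 < η k ∧ η k ≤ 1 / L k)
    (X : ℕ → Fin (K + 1) → E)
    (hsweep : ∀ (ℓ : ℕ) (k : Fin (K + 1)),
      X (ℓ + 1) k = X ℓ k -
        η k • blockGrad J (fun j => if k < j then X (ℓ + 1) j else X ℓ j) k) :
    Summable (fun ℓ : ℕ => ∑ k, ‖X (ℓ + 1) k - X ℓ k‖ ^ 2) ∧
      ∀ k : Fin (K + 1),
        Tendsto (fun ℓ : ℕ => ‖X (ℓ + 1) k - X ℓ k‖) atTop (𝓝 0) := by
  classical
  obtain ⟨B, hB⟩ := hbdd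
  have hJd : Differentiable ℝ J := hJ.differentiable one_ne_zero
  have hupdDiff : ∀ (Y : Fin (K + 1) → E) (k : Fin (K + 1)),
      Differentiable ℝ (fun u : E => J (Function.update Y k u)) := by
    intro Y k
    apply hJd.comp
    rw [differentiable_pi]
    intro j
    simp only [Function.update_apply]
    by_cases h : j = k
    · simp [h]
    · simp [h]
  -- per-sweep descent
  have key : ∀ ℓ : ℕ,
      J (X (ℓ + 1)) + ∑ k, 1 / (2 * η k) * ‖X (ℓ + 1) k - X ℓ k‖ ^ 2 ≤ J (X ℓ) := by
    intro ℓ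
    set W : ℕ → Fin (K + 1) → E := fun m j => if m ≤ j.val then X (ℓ + 1) j else X ℓ j with hW
    have hW0 : W 0 = X (ℓ + 1) := funext fun j => if_pos (Nat.zero_le _)
    have hWtop : W (K + 1) = X ℓ := funext fun j => if_neg (by omega)
    have hstep : ∀ (m : ℕ) (hm : m < K + 1),
        J (W m) + 1 / (2 * η ⟨m, hm⟩) * ‖X (ℓ + 1) ⟨m, hm⟩ - X ℓ ⟨m, hm⟩‖ ^ 2
          ≤ J (W (m + 1)) := by
      intro m hm
      set k : Fin (K + 1) := ⟨m, hm⟩ with hk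
      set Y : Fin (K + 1) → E := W (m + 1) with hY
      have hYk : Y k = X ℓ k := if_neg (Nat.not_succ_le_self m)
      have hYeq : (fun j => if k < j then X (ℓ + 1) j else X ℓ j) = Y := by
        funext j
        show (if k < j then X (ℓ + 1) j else X ℓ j) = if m + 1 ≤ j.val then X (ℓ + 1) j else X ℓ j
        exact if_congr (by rw [Fin.lt_def]; exact Iff.rfl) rfl rfl
      have hupd1 : Function.update Y k (X (ℓ + 1) k) = W m := by
        funext j
        by_cases hj : j = k
        · subst hj; rw [Function.update_self]; exact (if_pos (le_refl m)).symm
        · rw [Function.update_of_ne hj]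
          have hjm : j.val ≠ m := fun h => hj (Fin.ext h)
          show (if m + 1 ≤ j.val then X (ℓ + 1) j else X ℓ j)
              = if m ≤ j.val then X (ℓ + 1) j else X ℓ j
          exact if_congr (by omega) rfl rfl
      have hupd2 : Function.update Y k (X ℓ k) = Y := by
        rw [← hYk]; exact Function.update_eq_self k Y
      have hηL : η k * L k ≤ 1 := (le_div_iff₀ (hL k)).mp (hη k).2
      have hds := descent_step (fun u => J (Function.update Y k u)) (hupdDiff Y k)
        (hη k).1 hηL (fun u v => hLip k Y u v) (X ℓ k)
      have hXs : X (ℓ + 1) k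
          = X ℓ k - η k • gradient (fun u => J (Function.update Y k u)) (X ℓ k) := by
        rw [hsweep ℓ k, hYeq]
        unfold blockGrad
        rw [hYk]
      rw [← hXs] at hds
      have hds' : J (Function.update Y k (X (ℓ + 1) k)) ≤ J (Function.update Y k (X ℓ k))
          - 1 / (2 * η k) * ‖X (ℓ + 1) k - X ℓ k‖ ^ 2 := hds
      rw [hupd1, hupd2] at hds'
      linarith
    have hind : ∀ n, n ≤ K + 1 → J (W 0) + (∑ i ∈ Finset.range n,
        if h : i < K + 1 then
          1 / (2 * η ⟨i, h⟩) * ‖X (ℓ + 1) ⟨i, h⟩ - X ℓ ⟨i, h⟩‖ ^ 2 else 0) ≤ J (W n) := by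
      intro n
      induction n with
      | zero => simp
      | succ n ih =>
        intro hn
        have hn' : n < K + 1 := hn
        rw [Finset.sum_range_succ, dif_pos hn']
        have h1 := hstep n hn'
        have h2 := ih (le_of_lt hn')
        linarith
    have hfin := hind (K + 1) le_rfl
    rw [hW0, hWtop] at hfin
    have hsum : ∑ k : Fin (K + 1), 1 / (2 * η k) * ‖X (ℓ + 1) k - X ℓ k‖ ^ 2
        = ∑ i ∈ Finset.range (K + 1),
          if h : i < K + 1 then
            1 / (2 * η ⟨i, h⟩) * ‖X (ℓ + 1) ⟨i, h⟩ - X ℓ ⟨i, h⟩‖ ^ 2 else 0 := by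
      rw [← Fin.sum_univ_eq_sum_range]
      exact Finset.sum_congr rfl fun k _ => by rw [dif_pos k.isLt]
    rw [hsum]
    exact hfin
  set S : ℕ → ℝ := fun ℓ => ∑ k, ‖X (ℓ + 1) k - X ℓ k‖ ^ 2 with hSdef
  have hSnonneg : ∀ ℓ, 0 ≤ S ℓ := fun ℓ => Finset.sum_nonneg fun k _ => sq_nonneg _
  have hne : (Finset.univ : Finset (Fin (K + 1))).Nonempty := Finset.univ_nonempty
  set c : ℝ := Finset.univ.inf' hne (fun k => 1 / (2 * η k)) with hcdef
  have hcpos : 0 < c := by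
    rw [hcdef, Finset.lt_inf'_iff]
    intro k _
    have := (hη k).1
    positivity
  have hcS : ∀ ℓ, c * S ℓ ≤ ∑ k, 1 / (2 * η k) * ‖X (ℓ + 1) k - X ℓ k‖ ^ 2 := by
    intro ℓ
    rw [hSdef, Finset.mul_sum]
    exact Finset.sum_le_sum fun k _ =>
      mul_le_mul_of_nonneg_right (Finset.inf'_le _ (Finset.mem_univ k)) (sq_nonneg _)
  have hpartial : ∀ N, ∑ ℓ ∈ Finset.range N, S ℓ ≤ (J (X 0) - B) / c := by
    intro N
    rw [le_div_iff₀ hcpos]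
    calc (∑ ℓ ∈ Finset.range N, S ℓ) * c = ∑ ℓ ∈ Finset.range N, c * S ℓ := by
          rw [Finset.sum_mul]; exact Finset.sum_congr rfl fun ℓ _ => mul_comm _ _
      _ ≤ ∑ ℓ ∈ Finset.range N, (J (X ℓ) - J (X (ℓ + 1))) :=
          Finset.sum_le_sum fun ℓ _ => by
            have h1 := key ℓ; have h2 := hcS ℓ; linarith
      _ = J (X 0) - J (X N) := Finset.sum_range_sub' (fun ℓ => J (X ℓ)) N
      _ ≤ J (X 0) - B := by have := hB (X N); linarith
  have hsummable : Summable S := summable_of_sum_range_le hSnonneg hpartial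
  refine ⟨hsummable, fun k => ?_⟩
  have h1 : Tendsto S atTop (𝓝 0) := hsummable.tendsto_atTop_zero
  have h2 : Tendsto (fun ℓ => ‖X (ℓ + 1) k - X ℓ k‖ ^ 2) atTop (𝓝 0) :=
    squeeze_zero (fun ℓ => sq_nonneg _)
      (fun ℓ => Finset.single_le_sum (f := fun j : Fin (K + 1) => ‖X (ℓ + 1) j - X ℓ j‖ ^ 2)
        (fun j _ => sq_nonneg _) (Finset.mem_univ k)) h1
  have h3 := h2.sqrt
  rw [Real.sqrt_zero] at h3
  have h4 : (fun ℓ => Real.sqrt (‖X (ℓ + 1) k - X ℓ k‖ ^ 2))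
      = fun ℓ => ‖X (ℓ + 1) k - X ℓ k‖ := funext fun ℓ => Real.sqrt_sq (norm_nonneg _)
  rwa [h4] at h3
end
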